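/- arXiv:1905.11134 — 2 statements merged into one kernel-verified Lean document; each statement's English description precedes it below -/
import Mathlib

section
/- Let K be a class of graphs and let W be a finite graph. Then W satisfies every quasi-identity that is satisfied by all members of K (i.e., W ∈ Modf qId K) if and only if the following two conditions hold: (a) for every a ∈ V(W) there exist a graph G_a ∈ K and a strong homomorphism φ_a : reach_W(a) → G_a; (b) for all a, a' ∈ V(W) with a ≠ a' and reach_W(a) = reach_W(a'), there exist a graph G_{a,a'} ∈ K and a strong homomorphism φ : reach_W(a) → G_{a,a'} with φ(a) ≠ φ(a'). -/
open Classical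

/-- A graph `(V, E)`: an ambient type `U`, a set `verts ⊆ U` of vertices and an
edge relation `Edge ⊆ verts × verts`. -/
structure DGraph : Type 1 where
  U : Type
  verts : Set U
  Edge : U → U → Prop
  edge_mem : ∀ a b, Edge a b → a ∈ verts ∧ b ∈ verts

namespace DGraph

/-- The induced subgraph of `G` on a set `S`. -/
def induce (G : DGraph) (S : Set G.U) : DGraph where
  U := G.U
  verts := G.verts ∩ S
  Edge a b := G.Edge a b ∧ a ∈ S ∧ b ∈ S
  edge_mem a b h := ⟨⟨(G.edge_mem a b h.1).1, h.2.1⟩, (G.edge_mem a b h.1).2, h.2.2⟩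

/-- The set of vertices reachable from `a` by a directed walk (including `a` itself). -/
def reachSet (G : DGraph) (a : G.U) : Set G.U := {b | Relation.ReflTransGen G.Edge a b}

/-- The subgraph of `G` induced by the set of vertices reachable from `a`. -/
def reachSub (G : DGraph) (a : G.U) : DGraph := G.induce (G.reachSet a)

/-- A graph is undirected if its edge relation is symmetric. -/
def Undirected (G : DGraph) : Prop := ∀ a b, G.Edge a b → G.Edge b a

end DGraph

/-- A homomorphism of graphs: maps vertices to vertices and edges to edges. -/
def IsHom (G H : DGraph) (f : G.U → H.U) : Prop :=
  (∀ a ∈ G.verts, f a ∈ H.verts) ∧ ∀ a b, G.Edge a b → H.Edge (f a) (f b)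

/-- A strong homomorphism: additionally maps non-edges to non-edges. -/
def IsStrongHom (G H : DGraph) (f : G.U → H.U) : Prop :=
  IsHom G H f ∧ ∀ a ∈ G.verts, ∀ b ∈ G.verts, ¬ G.Edge a b → ¬ H.Edge (f a) (f b)

/-- Isomorphism of graphs. -/
def IsIsomorphic (G H : DGraph) : Prop :=
  ∃ f : G.U → H.U, Set.BijOn f G.verts H.verts ∧
    ∀ a ∈ G.verts, ∀ b ∈ G.verts, (G.Edge a b ↔ H.Edge (f a) (f b))

/-- Terms of type (2,0) over a variable set `X`: variables, the constant `∞`,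
and a binary operation (juxtaposition). -/
inductive GTerm (X : Type) : Type
  | var : X → GTerm X
  | inf : GTerm X
  | app : GTerm X → GTerm X → GTerm X

namespace GTerm

/-- The set of variables occurring in a term. -/
def vars {X : Type} : GTerm X → Set X
  | var x => {x}
  | inf => ∅
  | app t₁ t₂ => t₁.vars ∪ t₂.vars

/-- A term is nontrivial if it contains no occurrence of `∞`. -/
def Nontrivial {X : Type} : GTerm X → Prop
  | var _ => True
  | inf => False
  | app t₁ t₂ => t₁.Nontrivial ∧ t₂.Nontrivial

/-- The leftmost variable of a term (`none` for the bare constant `∞` on the left). -/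
def leftVar {X : Type} : GTerm X → Option X
  | var x => some x
  | inf => none
  | app t₁ _ => t₁.leftVar

/-- The edge set of the term graph `G(t)`. -/
def edges {X : Type} : GTerm X → Set (X × X)
  | var _ => ∅
  | inf => ∅
  | app t₁ t₂ =>
      t₁.edges ∪ t₂.edges ∪
        {p | ∃ x y, t₁.leftVar = some x ∧ t₂.leftVar = some y ∧ p = (x, y)}

theorem vars_finite {X : Type} (t : GTerm X) : t.vars.Finite := by
  induction t with
  | var x => simpa [vars] using Set.finite_singleton x
  | inf => simpa [vars] using Set.finite_empty
  | app t₁ t₂ ih₁ ih₂ => simpa [vars] using ih₁.union ih₂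

end GTerm

/-- The term graph `G(t)` of a term `t`: vertices are the variables of `t`. -/
def termGraph {X : Type} (t : GTerm X) : DGraph where
  U := X
  verts := t.vars
  Edge a b := (a, b) ∈ t.edges ∧ a ∈ t.vars ∧ b ∈ t.vars
  edge_mem a b h := ⟨h.2.1, h.2.2⟩

/-- Evaluation of a term in the graph algebra `A(G)`; `none` plays the role of `∞`:
`x · y = x` if `(x,y)` is an edge, and `∞` otherwise. -/
noncomputable def DGraph.eval (G : DGraph) {X : Type} (h : X → Option G.U) :
    GTerm X → Option G.U
  | .var x => h x
  | .inf => none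
  | .app t₁ t₂ =>
      match G.eval h t₁, G.eval h t₂ with
      | some a, some b => if G.Edge a b then some a else none
      | _, _ => none

/-- Identities: pairs of terms. -/
abbrev GId (X : Type) := GTerm X × GTerm X

/-- An assignment takes values in `V(G) ∪ {∞}`. -/
def DGraph.Assign (G : DGraph) {X : Type} (h : X → Option G.U) : Prop :=
  ∀ x a, h x = some a → a ∈ G.verts

/-- The assignment `h` makes the identity `e` true in `A(G)`. -/
def DGraph.SatIdWith (G : DGraph) {X : Type} (h : X → Option G.U) (e : GId X) : Prop :=
  G.eval h e.1 = G.eval h e.2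

/-- `G` satisfies the identity `e`. -/
def DGraph.SatId (G : DGraph) {X : Type} (e : GId X) : Prop :=
  ∀ h : X → Option G.U, G.Assign h → G.SatIdWith h e

/-- An implication (quasi-identity) over the standard countably infinite
variable set `ℕ`: a finite set of identities (the premise) and an identity
(the consequence). -/
structure Imp : Type where
  prem : Set (GId ℕ)
  concl : GId ℕ
  prem_fin : prem.Finite

/-- `G` satisfies the implication `imp`. -/
def DGraph.SatImp (G : DGraph) (imp : Imp) : Prop :=
  ∀ h : ℕ → Option G.U, G.Assign h →
    (∀ e ∈ imp.prem, G.SatIdWith h e) → G.SatIdWith h imp.concl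

/-- The implications satisfied by every member of a class `K` of graphs. -/
def qId (K : Set DGraph) : Set Imp := {imp | ∀ G ∈ K, G.SatImp imp}

/-- The class of graphs satisfying every implication of `Sg`. -/
def ModI (Sg : Set Imp) : Set DGraph := {G | ∀ imp ∈ Sg, G.SatImp imp}

/-- The finite members of `ModI Sg`. -/
def ModIf (Sg : Set Imp) : Set DGraph := {G | G ∈ ModI Sg ∧ G.verts.Finite}

/-- The pointed graph `G^⊥`: a new vertex `⊥ = none` with edges from `⊥` to all
vertices, including a loop at `⊥`. -/
def DGraph.pointed (G : DGraph) : DGraph where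
  U := Option G.U
  verts := insert none (some '' G.verts)
  Edge a b := b ∈ insert none (some '' G.verts) ∧
    (a = none ∨ ∃ u v, a = some u ∧ b = some v ∧ G.Edge u v)
  edge_mem a b h := by
    refine ⟨?_, h.1⟩
    rcases h.2 with rfl | ⟨u, v, rfl, rfl, huv⟩
    · exact Set.mem_insert _ _
    · exact Set.mem_insert_of_mem _ ⟨u, (G.edge_mem u v huv).1, rfl⟩

/-- Direct product of a family of graphs (componentwise edges). -/
def gProd {I : Type} (G : I → DGraph) : DGraph where
  U := (i : I) → (G i).U
  verts := {a | ∀ i, a i ∈ (G i).verts}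
  Edge a b := ∀ i, (G i).Edge (a i) (b i)
  edge_mem a b h :=
    ⟨fun i => ((G i).edge_mem _ _ (h i)).1, fun i => ((G i).edge_mem _ _ (h i)).2⟩

/-- The pointed product `∏ i, (G i)^⊥` of a family of graphs. -/
def pointedProd {I : Type} (G : I → DGraph) : DGraph := gProd fun i => (G i).pointed

/-- `W` is a strong pointed subproduct of the family `G`:
(1) `W` is an induced subgraph of the pointed product;
(2) every vertex has nonempty support;
(3) for every vertex `a` and every `k` in the support of `a`, the projection `p k`
restricted to `reach_W(a)` is a strong homomorphism into `G k`. -/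
def IsSPSofFam {I : Type} (G : I → DGraph) (W : DGraph) : Prop :=
  ∃ S : Set (pointedProd G).U,
    W = (pointedProd G).induce S ∧
    (∀ a ∈ ((pointedProd G).induce S).verts, ∃ i, a i ≠ none) ∧
    (∀ a ∈ ((pointedProd G).induce S).verts, ∀ k : I, a k ≠ none →
      (∀ b ∈ (((pointedProd G).induce S).reachSub a).verts, b k ≠ none) ∧
      (∀ b ∈ (((pointedProd G).induce S).reachSub a).verts,
        ∀ u, b k = some u → u ∈ (G k).verts) ∧
      (∀ b ∈ (((pointedProd G).induce S).reachSub a).verts,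
       ∀ c ∈ (((pointedProd G).induce S).reachSub a).verts,
        ∀ u v, b k = some u → c k = some v →
          ((((pointedProd G).induce S).reachSub a).Edge b c ↔ (G k).Edge u v)))

/-- The class of all strong pointed subproducts of families of members of `K`. -/
def Psps (K : Set DGraph) : Set DGraph :=
  {W | ∃ (I : Type) (G : I → DGraph), (∀ i, G i ∈ K) ∧ IsSPSofFam G W}

/-- The finite members of `Psps K`. -/
def PspsFin (K : Set DGraph) : Set DGraph := {W | W ∈ Psps K ∧ W.verts.Finite}

/-- Isomorphic copies of members of a class of graphs. -/
def Icl (C : Set DGraph) : Set DGraph := {W | ∃ V ∈ C, IsIsomorphic V W}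

/-- `W` is the union of a directed family of members of `C` (the members of the
family are induced subgraphs of a common member, pairwise). -/
def IsDirUnionOf (W : DGraph) (C : Set DGraph) : Prop :=
  ∃ (ι : Type) (V : ι → Set W.U) (E : ι → W.U → W.U → Prop)
    (hmem : ∀ i, ∀ a b, E i a b → a ∈ V i ∧ b ∈ V i),
    (∀ i, DGraph.mk W.U (V i) (E i) (hmem i) ∈ C) ∧
    (∀ i j, ∃ k,
      (V i ⊆ V k ∧ ∀ a b, E i a b ↔ E k a b ∧ a ∈ V i ∧ b ∈ V i) ∧
      (V j ⊆ V k ∧ ∀ a b, E j a b ↔ E k a b ∧ a ∈ V j ∧ b ∈ V j)) ∧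
    W.verts = ⋃ i, V i ∧
    ∀ a b, W.Edge a b ↔ ∃ i, E i a b

/-- The class of all directed unions of members of `C`. -/
def DCl (C : Set DGraph) : Set DGraph := {W | IsDirUnionOf W C}

/-- Condition (a) of Proposition `IPK-ab`. -/
def CondA (K : Set DGraph) (W : DGraph) : Prop :=
  ∀ a ∈ W.verts, ∃ Ga ∈ K, ∃ φ : W.U → Ga.U, IsStrongHom (W.reachSub a) Ga φ

/-- Condition (b) of Proposition `IPK-ab`. -/
def CondB (K : Set DGraph) (W : DGraph) : Prop :=
  ∀ a ∈ W.verts, ∀ a' ∈ W.verts, a ≠ a' → W.reachSet a = W.reachSet a' →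
    ∃ Gp ∈ K, ∃ φ : W.U → Gp.U, IsStrongHom (W.reachSub a) Gp φ ∧ φ a ≠ φ a'

/-- The identities `x_a x_b ≈ x_a` for edges `(a,b)` of `G` (variables are the
vertices of `G`). -/
def GammaE (G : DGraph) : Set (GId G.U) :=
  {e | ∃ a b, G.Edge a b ∧ e = (GTerm.app (GTerm.var a) (GTerm.var b), GTerm.var a)}

/-- The identities `x_a x_b ≈ ∞` for non-edges `(a,b)` of `G`. -/
def GammaN (G : DGraph) : Set (GId G.U) :=
  {e | ∃ a b, a ∈ G.verts ∧ b ∈ G.verts ∧ ¬ G.Edge a b ∧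
    e = (GTerm.app (GTerm.var a) (GTerm.var b), GTerm.inf)}

/-- `Σ(G) = Γ_e(G) ∪ Γ_n(G)`. -/
def SigmaIds (G : DGraph) : Set (GId G.U) := GammaE G ∪ GammaN G

theorem SigmaIds_finite (G : DGraph) (hfin : G.verts.Finite) : (SigmaIds G).Finite := by
  classical
  have hsub : SigmaIds G ⊆
      (fun p : G.U × G.U =>
        if G.Edge p.1 p.2 then
          (GTerm.app (GTerm.var p.1) (GTerm.var p.2), GTerm.var p.1)
        else (GTerm.app (GTerm.var p.1) (GTerm.var p.2), GTerm.inf)) ''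
        (G.verts ×ˢ G.verts) := by
    rintro e (⟨a, b, hab, rfl⟩ | ⟨a, b, ha, hb, hnab, rfl⟩)
    · exact ⟨(a, b), Set.mk_mem_prod (G.edge_mem a b hab).1 (G.edge_mem a b hab).2,
        by simp [hab]⟩
    · exact ⟨(a, b), Set.mk_mem_prod ha hb, by simp [hnab]⟩
  exact ((hfin.prod hfin).image _).subset hsub

/-!
If a quasi-identity fails in `W`, the two sides of its conclusion evaluate to distinct elements
`x ≠ y` of `A(W)`. A strong homomorphism `φ` on `reach_W(a)`, extended by `∞` outside
`reach_W(a)`, is a homomorphism of graph algebras `A(W) → A(G)` and so transports the premises;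
conditions (a) and (b) supply one that still separates `x` and `y`.

Conversely, take as premise the finite diagram `Σ(reach_W(a))` (the identities `x_b x_c ≈ x_b` on
edges and `x_b x_c ≈ ∞` on non-edges) and as conclusion `x_a ≈ ∞`, resp. `x_a ≈ x_{a'}`. This
quasi-identity fails in `W`, hence in some member of `K`; there definedness propagates along the
edges from `a` (resp. `a'`, which reaches `a`), so the refuting assignment restricts to the strong
homomorphism required by (a), resp. (b).
-/

namespace GTerm

def map {X Y : Type} (f : X → Y) : GTerm X → GTerm Y
  | var x => var (f x)
  | inf => inf
  | app t₁ t₂ => app (t₁.map f) (t₂.map f)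

end GTerm

namespace DGraph

theorem eval_map (G : DGraph) {X Y : Type} (f : X → Y) (h : Y → Option G.U) (t : GTerm X) :
    G.eval h (t.map f) = G.eval (h ∘ f) t := by
  induction t with
  | var x => rfl
  | inf => rfl
  | app t₁ t₂ ih₁ ih₂ => simp only [GTerm.map, eval, ih₁, ih₂]

theorem satIdWith_map (G : DGraph) {X Y : Type} (f : X → Y) (h : Y → Option G.U) (e : GId X) :
    G.SatIdWith h (e.1.map f, e.2.map f) ↔ G.SatIdWith (h ∘ f) e := by
  simp only [SatIdWith, eval_map]

theorem Assign.comp {G : DGraph} {X Y : Type} {h : Y → Option G.U} (hA : G.Assign h)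
    (f : X → Y) : G.Assign (h ∘ f) :=
  fun x => hA (f x)

theorem eval_app_eq_some {G : DGraph} {X : Type} {h : X → Option G.U} {t₁ t₂ : GTerm X}
    {u : G.U} (he : G.eval h (.app t₁ t₂) = some u) : G.eval h t₁ = some u := by
  rw [eval] at he
  rcases h₁ : G.eval h t₁ with _ | p <;> rcases h₂ : G.eval h t₂ with _ | q <;>
    simp only [h₁, h₂, reduceCtorEq] at he
  split_ifs at he
  exact he

theorem eval_mem_verts {G : DGraph} {X : Type} {h : X → Option G.U} (hA : G.Assign h)
    {t : GTerm X} {u : G.U} (he : G.eval h t = some u) : u ∈ G.verts := by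
  induction t with
  | var x => exact hA x u he
  | inf => exact absurd he (by simp [eval])
  | app t₁ t₂ ih₁ _ => exact ih₁ (eval_app_eq_some he)

theorem satIdWith_edge_iff (G : DGraph) {X : Type} (g : X → Option G.U) (b c : X) :
    G.SatIdWith g (.app (.var b) (.var c), .var b) ↔
      ∀ p, g b = some p → ∃ q, g c = some q ∧ G.Edge p q := by
  simp only [SatIdWith, eval]
  rcases g b with _ | p
  · simp
  rcases g c with _ | q
  · simp
  by_cases hpq : G.Edge p q <;> simp [hpq]

theorem satIdWith_nonEdge_iff (G : DGraph) {X : Type} (g : X → Option G.U) (b c : X) :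
    G.SatIdWith g (.app (.var b) (.var c), .inf) ↔
      ∀ p q, g b = some p → g c = some q → ¬ G.Edge p q := by
  simp only [SatIdWith, eval]
  rcases g b with _ | p
  · simp
  rcases g c with _ | q
  · simp
  by_cases hpq : G.Edge p q <;> simp [hpq]

theorem satIdWith_sigmaIds_induce {W : DGraph} {S : Set W.U} {g : W.U → Option W.U}
    (hg : ∀ u ∈ W.verts, g u = some u) : ∀ e ∈ SigmaIds (W.induce S), W.SatIdWith g e := by
  rintro e (⟨u, v, huv, rfl⟩ | ⟨u, v, hu, hv, huv, rfl⟩)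
  · obtain ⟨hu, hv⟩ := W.edge_mem u v huv.1
    refine (satIdWith_edge_iff W g u v).2 fun p hp => ?_
    obtain rfl : p = u := Option.some_injective _ (hp.symm.trans (hg u hu))
    exact ⟨v, hg v hv, huv.1⟩
  · refine (satIdWith_nonEdge_iff W g u v).2 fun p q hp hq => ?_
    obtain rfl : p = u := Option.some_injective _ (hp.symm.trans (hg u hu.1))
    obtain rfl : q = v := Option.some_injective _ (hq.symm.trans (hg v hv.1))
    exact fun h => huv ⟨h, hu.2, hv.2⟩

theorem isStrongHom_getD_of_sigmaIds {H G : DGraph} {g : H.U → Option G.U} (hA : G.Assign g)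
    (hsat : ∀ e ∈ SigmaIds H, G.SatIdWith g e) (hdef : ∀ u ∈ H.verts, g u ≠ none) (p₀ : G.U) :
    IsStrongHom H G fun u => (g u).getD p₀ := by
  have hsome : ∀ u ∈ H.verts, g u = some ((g u).getD p₀) :=
    fun u hu => (Option.getD_of_ne_none (hdef u hu) p₀).symm
  refine ⟨⟨fun u hu => hA u _ (hsome u hu), fun b c hbc => ?_⟩, fun b hb c hc hbc => ?_⟩
  · obtain ⟨q, hq, hpq⟩ := (satIdWith_edge_iff G g b c).1 (hsat _ (Or.inl ⟨b, c, hbc, rfl⟩))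
      _ (hsome b (H.edge_mem b c hbc).1)
    simpa only [hq, Option.getD_some] using hpq
  · exact (satIdWith_nonEdge_iff G g b c).1 (hsat _ (Or.inr ⟨b, c, hb, hc, hbc, rfl⟩))
      _ _ (hsome b hb) (hsome c hc)

theorem ne_none_of_reflTransGen {W G : DGraph} {a : W.U} {g : W.U → Option G.U}
    (hsat : ∀ e ∈ SigmaIds (W.reachSub a), G.SatIdWith g e) {u v : W.U}
    (hu : u ∈ W.reachSet a) (huv : Relation.ReflTransGen W.Edge u v) (hgu : g u ≠ none) :
    g v ≠ none := by
  induction huv with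
  | refl => exact hgu
  | @tail b c hub hbc ih =>
    have hb : b ∈ W.reachSet a := hu.trans hub
    obtain ⟨p, hp⟩ := Option.ne_none_iff_exists'.mp ih
    obtain ⟨q, hq, -⟩ := (satIdWith_edge_iff G g b c).1
      (hsat _ (Or.inl ⟨b, c, ⟨hbc, hb, hb.tail hbc⟩, rfl⟩)) p hp
    simp [hq]

theorem exists_isStrongHom_reachSub {W G : DGraph} {a b : W.U} {g : W.U → Option G.U}
    (hA : G.Assign g) (hsat : ∀ e ∈ SigmaIds (W.reachSub a), G.SatIdWith g e)
    (hba : b ∈ W.reachSet a) (hab : a ∈ W.reachSet b) (hgb : g b ≠ none) :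
    ∃ φ : W.U → G.U, IsStrongHom (W.reachSub a) G φ ∧
      ∀ u ∈ W.reachSet a, g u = some (φ u) := by
  have hdef : ∀ u ∈ W.reachSet a, g u ≠ none :=
    fun u hu => ne_none_of_reflTransGen hsat hba (hab.trans hu) hgb
  obtain ⟨p₀, -⟩ := Option.ne_none_iff_exists'.mp hgb
  exact ⟨_, isStrongHom_getD_of_sigmaIds (H := W.reachSub a) hA hsat
    (fun u hu => hdef u hu.2) p₀,
    fun u hu => (Option.getD_of_ne_none (hdef u hu) p₀).symm⟩

end DGraph

theorem DGraph.exists_nat_code {W : DGraph} (hW : W.verts.Countable) :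
    ∃ (enc : W.U → ℕ) (dec : ℕ → Option W.U),
      W.Assign dec ∧ ∀ u ∈ W.verts, dec (enc u) = some u := by
  obtain ⟨f, hf⟩ := Set.countable_iff_exists_injective.mp hW
  refine ⟨fun u => if hu : u ∈ W.verts then f ⟨u, hu⟩ else 0,
    Function.extend f (fun u => some u.1) fun _ => none, fun n u hn => ?_, fun u hu => ?_⟩
  · by_cases hrange : ∃ v, f v = n
    · obtain ⟨v, rfl⟩ := hrange
      rw [hf.extend_apply, Option.some_inj] at hn
      exact hn ▸ v.2
    · rw [Function.extend_apply' _ _ _ hrange] at hn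
      exact absurd hn (by simp)
  · simp only [dif_pos hu, hf.extend_apply]

theorem exists_refuting_of_mem_modI {K : Set DGraph} {W : DGraph} (hW : W ∈ ModI (qId K))
    {X : Type} (enc : X → ℕ) {Γ : Set (GId X)} (hΓ : Γ.Finite) (e : GId X)
    {h : ℕ → Option W.U} (hA : W.Assign h) (hΓh : ∀ e' ∈ Γ, W.SatIdWith (h ∘ enc) e')
    (heh : ¬ W.SatIdWith (h ∘ enc) e) :
    ∃ G ∈ K, ∃ g : ℕ → Option G.U, G.Assign g ∧
      (∀ e' ∈ Γ, G.SatIdWith (g ∘ enc) e') ∧ ¬ G.SatIdWith (g ∘ enc) e := by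
  let rename : GId X → GId ℕ := fun e => (e.1.map enc, e.2.map enc)
  by_contra! hK
  refine heh ((W.satIdWith_map enc h e).1
    (hW ⟨rename '' Γ, rename e, hΓ.image rename⟩ ?_ h hA ?_))
  · intro G hG g hg hprem
    refine (G.satIdWith_map enc g e).2 (hK G hG g hg fun e' he' => ?_)
    exact (G.satIdWith_map enc g e').1 (hprem _ ⟨e', he', rfl⟩)
  · rintro _ ⟨e', he', rfl⟩
    exact (W.satIdWith_map enc h e').2 (hΓh e' he')

theorem exists_sigmaIds_model {K : Set DGraph} {W : DGraph} (hW : W ∈ ModI (qId K))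
    (hfin : W.verts.Finite) (a : W.U) (e : GId W.U)
    (he : ∀ g : W.U → Option W.U, (∀ u ∈ W.verts, g u = some u) → ¬ W.SatIdWith g e) :
    ∃ G ∈ K, ∃ g : W.U → Option G.U, G.Assign g ∧
      (∀ e' ∈ SigmaIds (W.reachSub a), G.SatIdWith g e') ∧ ¬ G.SatIdWith g e := by
  obtain ⟨enc, dec, hdecA, hdec⟩ := DGraph.exists_nat_code hfin.countable
  obtain ⟨G, hG, g, hgA, hgSigma, hge⟩ := exists_refuting_of_mem_modI hW enc
    (SigmaIds_finite (W.reachSub a) (hfin.subset Set.inter_subset_left)) e hdecA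
    (DGraph.satIdWith_sigmaIds_induce hdec) (he _ hdec)
  exact ⟨G, hG, g ∘ enc, hgA.comp enc, hgSigma, hge⟩

theorem condA_of_mem_modI {K : Set DGraph} {W : DGraph} (hW : W ∈ ModI (qId K))
    (hfin : W.verts.Finite) : CondA K W := by
  intro a ha
  obtain ⟨G, hG, g, hgA, hgSigma, hga : g a ≠ none⟩ :=
    exists_sigmaIds_model hW hfin a (.var a, .inf) fun g hg h => by
      simp [DGraph.SatIdWith, DGraph.eval, hg a ha] at h
  obtain ⟨φ, hφ, -⟩ := DGraph.exists_isStrongHom_reachSub hgA hgSigma .refl .refl hga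
  exact ⟨G, hG, φ, hφ⟩

theorem condB_of_mem_modI {K : Set DGraph} {W : DGraph} (hW : W ∈ ModI (qId K))
    (hfin : W.verts.Finite) : CondB K W := by
  intro a ha a' ha' hne hreach
  have ha'a : a' ∈ W.reachSet a := hreach ▸ .refl
  have haa' : a ∈ W.reachSet a' := hreach ▸ .refl
  obtain ⟨G, hG, g, hgA, hgSigma, hgne : g a ≠ g a'⟩ :=
    exists_sigmaIds_model hW hfin a (.var a, .var a') fun g hg h =>
      hne (Option.some_injective _ ((hg a ha).symm.trans (h.trans (hg a' ha'))))
  obtain ⟨b, hba, hab, hgb⟩ : ∃ b ∈ W.reachSet a, a ∈ W.reachSet b ∧ g b ≠ none := by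
    by_cases hga : g a = none
    · exact ⟨a', ha'a, haa', fun hga' => hgne (hga.trans hga'.symm)⟩
    · exact ⟨a, .refl, .refl, hga⟩
  obtain ⟨φ, hφ, hgφ⟩ := DGraph.exists_isStrongHom_reachSub hgA hgSigma hba hab hgb
  exact ⟨G, hG, φ, hφ, fun h => hgne (by rw [hgφ a .refl, hgφ a' ha'a, h])⟩

namespace DGraph

noncomputable def extendByInf (W : DGraph) {G : DGraph} (a : W.U) (φ : W.U → G.U)
    (o : Option W.U) : Option G.U :=
  o.bind fun u => if u ∈ W.reachSet a then some (φ u) else none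

variable {W G : DGraph} {a : W.U} {φ : W.U → G.U}

@[simp]
theorem extendByInf_none : W.extendByInf a φ none = none := rfl

theorem extendByInf_some_of_mem {u : W.U} (hu : u ∈ W.reachSet a) :
    W.extendByInf a φ (some u) = some (φ u) := by
  simp [extendByInf, hu]

theorem extendByInf_some_of_not_mem {u : W.U} (hu : u ∉ W.reachSet a) :
    W.extendByInf a φ (some u) = none := by
  simp [extendByInf, hu]

theorem Assign.extendByInf (hφ : IsStrongHom (W.reachSub a) G φ) {X : Type}
    {h : X → Option W.U} (hA : W.Assign h) : G.Assign (W.extendByInf a φ ∘ h) := by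
  intro x p hp
  rcases hx : h x with _ | u
  · simp [hx] at hp
  by_cases hu : u ∈ W.reachSet a
  · rw [Function.comp_apply, hx, extendByInf_some_of_mem hu, Option.some_inj] at hp
    exact hp ▸ hφ.1.1 u ⟨hA x u hx, hu⟩
  · simp [hx, extendByInf_some_of_not_mem hu] at hp

theorem eval_extendByInf (hφ : IsStrongHom (W.reachSub a) G φ) {X : Type}
    {h : X → Option W.U} (hA : W.Assign h) (t : GTerm X) :
    G.eval (W.extendByInf a φ ∘ h) t = W.extendByInf a φ (W.eval h t) := by
  induction t with
  | var x => rfl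
  | inf => rfl
  | app t₁ t₂ ih₁ ih₂ =>
    rw [eval, eval, ih₁, ih₂]
    rcases h₁ : W.eval h t₁ with _ | u
    · simp
    rcases h₂ : W.eval h t₂ with _ | v
    · simp
    by_cases hu : u ∈ W.reachSet a
    swap
    · by_cases huv : W.Edge u v <;> simp [extendByInf_some_of_not_mem hu, huv]
    by_cases huv : W.Edge u v
    · have hv : v ∈ W.reachSet a := hu.tail huv
      simp [extendByInf_some_of_mem hu, extendByInf_some_of_mem hv, huv,
        hφ.1.2 u v ⟨huv, hu, hv⟩]
    by_cases hv : v ∈ W.reachSet a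
    · have hφuv : ¬ G.Edge (φ u) (φ v) := hφ.2 u ⟨eval_mem_verts hA h₁, hu⟩ v
        ⟨eval_mem_verts hA h₂, hv⟩ fun h => huv h.1
      simp [extendByInf_some_of_mem hu, extendByInf_some_of_mem hv, huv, hφuv]
    · simp [extendByInf_some_of_not_mem hv, huv]

theorem SatIdWith.extendByInf (hφ : IsStrongHom (W.reachSub a) G φ) {X : Type}
    {h : X → Option W.U} (hA : W.Assign h) {e : GId X} (he : W.SatIdWith h e) :
    G.SatIdWith (W.extendByInf a φ ∘ h) e := by
  rw [SatIdWith, eval_extendByInf hφ hA, eval_extendByInf hφ hA, he]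

theorem reachSet_eq_of_mem {u v : W.U} (hv : v ∈ W.reachSet u) (hu : u ∈ W.reachSet v) :
    W.reachSet u = W.reachSet v :=
  Set.ext fun _ => ⟨hu.trans, hv.trans⟩

end DGraph

theorem exists_extendByInf_some_ne {K : Set DGraph} {W : DGraph} (hA : CondA K W) {u : W.U}
    (hu : u ∈ W.verts) {y : Option W.U} (hy : ∀ v, y = some v → v ∉ W.reachSet u) :
    ∃ G ∈ K, ∃ a, ∃ φ : W.U → G.U, IsStrongHom (W.reachSub a) G φ ∧
      W.extendByInf a φ (some u) ≠ W.extendByInf a φ y := by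
  obtain ⟨G, hG, φ, hφ⟩ := hA u hu
  refine ⟨G, hG, u, φ, hφ, ?_⟩
  rcases y with _ | v
  · simp [DGraph.extendByInf_some_of_mem .refl]
  · simp [DGraph.extendByInf_some_of_mem .refl, DGraph.extendByInf_some_of_not_mem (hy v rfl)]

theorem exists_extendByInf_ne {K : Set DGraph} {W : DGraph} (hA : CondA K W) (hB : CondB K W)
    {x y : Option W.U} (hx : ∀ u, x = some u → u ∈ W.verts) (hy : ∀ v, y = some v → v ∈ W.verts)
    (hxy : x ≠ y) :
    ∃ G ∈ K, ∃ a, ∃ φ : W.U → G.U, IsStrongHom (W.reachSub a) G φ ∧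
      W.extendByInf a φ x ≠ W.extendByInf a φ y := by
  rcases x with _ | u <;> rcases y with _ | v
  · exact absurd rfl hxy
  · obtain ⟨G, hG, a, φ, hφ, hne⟩ := exists_extendByInf_some_ne hA (hy v rfl) (y := none) (by simp)
    exact ⟨G, hG, a, φ, hφ, hne.symm⟩
  · exact exists_extendByInf_some_ne hA (hx u rfl) (by simp)
  by_cases hvu : v ∈ W.reachSet u
  swap
  · exact exists_extendByInf_some_ne hA (hx u rfl) (by simpa using hvu)
  by_cases huv : u ∈ W.reachSet v
  swap
  · obtain ⟨G, hG, a, φ, hφ, hne⟩ := exists_extendByInf_some_ne hA (hy v rfl) (y := some u)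
      (by simpa using huv)
    exact ⟨G, hG, a, φ, hφ, hne.symm⟩
  obtain ⟨G, hG, φ, hφ, hφuv⟩ := hB u (hx u rfl) v (hy v rfl) (fun h => hxy (h ▸ rfl))
    (DGraph.reachSet_eq_of_mem hvu huv)
  refine ⟨G, hG, u, φ, hφ, ?_⟩
  simpa [DGraph.extendByInf_some_of_mem .refl, DGraph.extendByInf_some_of_mem hvu] using hφuv

theorem mem_modI_of_condA_of_condB {K : Set DGraph} {W : DGraph} (hA : CondA K W)
    (hB : CondB K W) : W ∈ ModI (qId K) := by
  intro imp himp h hh hprem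
  by_contra hne
  obtain ⟨G, hG, a, φ, hφ, hne'⟩ := exists_extendByInf_ne hA hB
    (fun _ => DGraph.eval_mem_verts hh) (fun _ => DGraph.eval_mem_verts hh) hne
  have hG := himp G hG _ (hh.extendByInf hφ) fun e he => (hprem e he).extendByInf hφ hh
  rw [DGraph.SatIdWith, DGraph.eval_extendByInf hφ hh, DGraph.eval_extendByInf hφ hh] at hG
  exact hne' hG

/-- a finite graph `W` belongs to `Modf qId K` iff conditions (a)
and (b) hold. -/
theorem statement_7 (K : Set DGraph) (W : DGraph) (hfin : W.verts.Finite) :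
    W ∈ ModI (qId K) ↔ (CondA K W ∧ CondB K W) :=
  ⟨fun hW => ⟨condA_of_mem_modI hW hfin, condB_of_mem_modI hW hfin⟩,
    fun h => mem_modI_of_condA_of_condB h.1 h.2⟩
end

section
/- Let t be a nontrivial term and let K be the class of all graphs H such that there exists no strong homomorphism of the term graph G(t) into H. Then K is a graph quasivariety; moreover, K = Mod {α → β}, where α = Σ(G(t)) (writing a variable x_a for each vertex a of G(t)) and β is the identity x_{L(t)} ≈ ∞. -/
open Classical

/-
A strong homomorphism `f : G(t) → H` is the same thing as an assignment `x_a ↦ f a` satisfying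
`Σ(G(t))` with `x_{L(t)}` defined (i.e. `≠ ∞`): the identities of `Σ` say exactly that edges
go to edges and non-edges to non-edges, and once `x_{L(t)}` is defined, the edge identities
`x_a x_b ≈ x_a` propagate definedness along the edges of `G(t)`, which reach every vertex from
`L(t)`. Finally, any class of the form `Mod Σ` is a quasivariety, as `Mod ∘ qId` is a closure.
-/

namespace GTerm

variable {X : Type}

theorem exists_leftVar_eq_some {t : GTerm X} (ht : t.Nontrivial) : ∃ x, t.leftVar = some x := by
  induction t with
  | var x => exact ⟨x, rfl⟩
  | inf => exact ht.elim
  | app t₁ _ ih₁ _ => exact ih₁ ht.1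

theorem leftVar_mem_vars {t : GTerm X} {x : X} (h : t.leftVar = some x) : x ∈ t.vars := by
  induction t with
  | var y => cases h; rfl
  | inf => cases h
  | app _ _ ih₁ _ => exact Or.inl (ih₁ h)

theorem mem_vars_of_mem_edges {t : GTerm X} {a b : X} (h : (a, b) ∈ t.edges) :
    a ∈ t.vars ∧ b ∈ t.vars := by
  induction t with
  | var _ | inf => cases h
  | app t₁ t₂ ih₁ ih₂ =>
    rcases h with (h | h) | ⟨x, y, hx, hy, hxy⟩
    · exact ⟨Or.inl (ih₁ h).1, Or.inl (ih₁ h).2⟩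
    · exact ⟨Or.inr (ih₂ h).1, Or.inr (ih₂ h).2⟩
    · obtain ⟨rfl, rfl⟩ := Prod.mk.inj hxy
      exact ⟨Or.inl (leftVar_mem_vars hx), Or.inr (leftVar_mem_vars hy)⟩

theorem reflTransGen_edges_of_mem_vars {t : GTerm X} (ht : t.Nontrivial) {x a : X}
    (hx : t.leftVar = some x) (ha : a ∈ t.vars) :
    Relation.ReflTransGen (fun a b => (a, b) ∈ t.edges) x a := by
  induction t generalizing x with
  | var y =>
    cases hx
    cases ha
    rfl
  | inf => exact ht.elim
  | app t₁ t₂ ih₁ ih₂ =>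
    rcases ha with ha | ha
    · exact .mono (fun _ _ h => Or.inl (Or.inl h)) _ _ (ih₁ ht.1 hx ha)
    · obtain ⟨y, hy⟩ := exists_leftVar_eq_some ht.2
      exact .head (Or.inr ⟨x, y, hx, hy, rfl⟩)
        (.mono (fun _ _ h => Or.inl (Or.inr h)) _ _ (ih₂ ht.2 hy ha))

end GTerm

theorem termGraph_edge_iff {X : Type} {t : GTerm X} {a b : X} :
    (termGraph t).Edge a b ↔ (a, b) ∈ t.edges :=
  ⟨And.left, fun h => ⟨h, GTerm.mem_vars_of_mem_edges h⟩⟩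

theorem termGraph_verts_subset_reachSet {X : Type} {t : GTerm X} (ht : t.Nontrivial) {x : X}
    (hx : t.leftVar = some x) : (termGraph t).verts ⊆ (termGraph t).reachSet x := fun _ ha =>
  .mono (fun _ _ => termGraph_edge_iff.mpr) _ _ (GTerm.reflTransGen_edges_of_mem_vars ht hx ha)

namespace DGraph

variable {H : DGraph} {X : Type} {h : X → Option H.U}

theorem satIdWith_edge_iff_s17 {a b : X} {u : H.U} (ha : h a = some u) :
    H.SatIdWith h (.app (.var a) (.var b), .var a) ↔ ∃ v, h b = some v ∧ H.Edge u v := by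
  simp only [SatIdWith, eval, ha]
  cases h b with
  | none => simp
  | some v => by_cases huv : H.Edge u v <;> simp [huv]

theorem satIdWith_nonEdge_iff_s17 {a b : X} :
    H.SatIdWith h (.app (.var a) (.var b), .inf) ↔
      ∀ u v, h a = some u → h b = some v → ¬ H.Edge u v := by
  simp only [SatIdWith, eval]
  cases h a with
  | none => simp
  | some u =>
    cases h b with
    | none => simp
    | some v => by_cases huv : H.Edge u v <;> simp [huv]

end DGraph

section SigmaIds

variable {G H : DGraph} {h : G.U → Option H.U}

-- `∞` off `G.verts`, since an assignment must take values in `V(H) ∪ {∞}`.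
noncomputable def homAssign (G H : DGraph) (f : G.U → H.U) (a : G.U) : Option H.U :=
  if a ∈ G.verts then some (f a) else none

theorem assign_homAssign {f : G.U → H.U} (hf : IsHom G H f) : H.Assign (homAssign G H f) := by
  intro a u hu
  unfold homAssign at hu
  split_ifs at hu with ha
  exact Option.some_inj.mp hu ▸ hf.1 a ha

theorem satIdWith_sigmaIds_of_isStrongHom {f : G.U → H.U} (hf : IsStrongHom G H f) :
    ∀ e ∈ SigmaIds G, H.SatIdWith (homAssign G H f) e := by
  have hsome : ∀ a ∈ G.verts, homAssign G H f a = some (f a) := fun a ha => if_pos ha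
  rintro e (⟨a, b, hab, rfl⟩ | ⟨a, b, ha, hb, hab, rfl⟩)
  · obtain ⟨ha, hb⟩ := G.edge_mem a b hab
    exact (DGraph.satIdWith_edge_iff_s17 (hsome a ha)).mpr ⟨f b, hsome b hb, hf.1.2 a b hab⟩
  · refine DGraph.satIdWith_nonEdge_iff_s17.mpr fun u v hu hv => ?_
    rw [hsome a ha, Option.some_inj] at hu
    rw [hsome b hb, Option.some_inj] at hv
    exact hu ▸ hv ▸ hf.2 a ha b hb hab

variable (hsat : ∀ e ∈ SigmaIds G, H.SatIdWith h e)
include hsat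

theorem exists_eq_some_of_edge {a b : G.U} {u : H.U} (hab : G.Edge a b) (ha : h a = some u) :
    ∃ v, h b = some v ∧ H.Edge u v :=
  (DGraph.satIdWith_edge_iff_s17 ha).mp (hsat _ (Or.inl ⟨a, b, hab, rfl⟩))

theorem exists_eq_some_of_mem_reachSet {x y : G.U} {u : H.U} (hx : h x = some u)
    (hy : y ∈ G.reachSet x) : ∃ v, h y = some v := by
  induction hy with
  | refl => exact ⟨u, hx⟩
  | tail _ hbc ih =>
    obtain ⟨_, hv⟩ := ih
    exact (exists_eq_some_of_edge hsat hbc hv).imp fun _ => And.left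

theorem isStrongHom_getD (hA : H.Assign h) (hdef : ∀ a ∈ G.verts, ∃ u, h a = some u)
    (u₀ : H.U) : IsStrongHom G H fun a => (h a).getD u₀ := by
  have hsome : ∀ a ∈ G.verts, h a = some ((h a).getD u₀) := by
    intro a ha
    obtain ⟨u, hu⟩ := hdef a ha
    simp [hu]
  refine ⟨⟨fun a ha => hA a _ (hsome a ha), fun a b hab => ?_⟩, fun a ha b hb hab => ?_⟩
  · obtain ⟨v, hv, huv⟩ := exists_eq_some_of_edge hsat hab (hsome a (G.edge_mem a b hab).1)
    simpa [hv] using huv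
  · exact DGraph.satIdWith_nonEdge_iff_s17.mp (hsat _ (Or.inr ⟨a, b, ha, hb, hab, rfl⟩)) _ _
      (hsome a ha) (hsome b hb)

end SigmaIds

theorem exists_isStrongHom_iff {G H : DGraph} {x : G.U} (hx : x ∈ G.verts)
    (hreach : G.verts ⊆ G.reachSet x) :
    (∃ f, IsStrongHom G H f) ↔
      ∃ h : G.U → Option H.U, H.Assign h ∧ (∀ e ∈ SigmaIds G, H.SatIdWith h e) ∧ h x ≠ none := by
  constructor
  · rintro ⟨f, hf⟩
    exact ⟨homAssign G H f, assign_homAssign hf.1, satIdWith_sigmaIds_of_isStrongHom hf,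
      by simp [homAssign, hx]⟩
  · rintro ⟨h, hA, hsat, hhx⟩
    obtain ⟨u₀, hu₀⟩ := Option.ne_none_iff_exists'.mp hhx
    exact ⟨_, isStrongHom_getD hsat hA
      (fun a ha => exists_eq_some_of_mem_reachSet hsat hu₀ (hreach ha)) u₀⟩

theorem eq_ModI_qId_of_eq_ModI {K : Set DGraph} {Sg : Set Imp} (hK : K = ModI Sg) :
    K = ModI (qId K) := by
  refine Set.Subset.antisymm (fun G hG imp himp => himp G hG) fun G hG => ?_
  rw [hK] at hG ⊢
  exact fun imp himp => hG imp fun G' hG' => hG' imp himp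

/-- for a nontrivial term `t`, the class of all graphs admitting
no strong homomorphism from the term graph `G(t)` is a graph quasivariety,
defined by the single implication `Σ(G(t)) → L(t) ≈ ∞`. -/
theorem statement_17 (t : GTerm ℕ) (ht : t.Nontrivial)
    (x0 : ℕ) (hx0 : t.leftVar = some x0) :
    {H : DGraph | ¬ ∃ f : ℕ → H.U, IsStrongHom (termGraph t) H f} =
      ModI (qId {H : DGraph | ¬ ∃ f : ℕ → H.U, IsStrongHom (termGraph t) H f}) ∧
    {H : DGraph | ¬ ∃ f : ℕ → H.U, IsStrongHom (termGraph t) H f} =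
      ModI {Imp.mk (SigmaIds (termGraph t)) (GTerm.var x0, GTerm.inf)
        (SigmaIds_finite (termGraph t) (GTerm.vars_finite t))} := by
  have hK : {H : DGraph | ¬ ∃ f : ℕ → H.U, IsStrongHom (termGraph t) H f} =
      ModI {Imp.mk (SigmaIds (termGraph t)) (GTerm.var x0, GTerm.inf)
        (SigmaIds_finite (termGraph t) (GTerm.vars_finite t))} := by
    ext H
    simp only [Set.mem_ofPred_eq, ModI, Set.mem_singleton_iff, forall_eq]
    refine (exists_isStrongHom_iff (GTerm.leftVar_mem_vars hx0)
      (termGraph_verts_subset_reachSet ht hx0)).not.trans ?_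
    simp only [not_exists, not_and, not_not]
    rfl
  exact ⟨eq_ModI_qId_of_eq_ModI hK, hK⟩
end
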